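/- arXiv:2407.03233 — 2 statements merged into one kernel-verified Lean document; each statement's English description precedes it below -/
import Mathlib

section
/- Let D ⊆ ℝ^{m×n} be open, let f : D → ℝ be differentiable, let a ∈ ℝ, and suppose the sublevel set S = {K ∈ D : f(K) ≤ a} is compact and there exists μ₂ > 0 with ‖∇f(K) − ∇f(K')‖_F ≤ μ₂ ‖K − K'‖_F for all K, K' ∈ S. Let K ∈ S, let G ∈ ℝ^{m×n} with G ≠ 0, and let η > 0 satisfy ⟨∇f(K), G⟩ > (μ₂ η / 2) ‖G‖_F². Then the entire segment {K − γ G : 0 ≤ γ ≤ η} is contained in S; in particular K − η G ∈ S and f(K − η G) ≤ a. -/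
open RealInnerProductSpace

set_option maxHeartbeats 1000000 in

theorem stmt11 (m n : ℕ) (hm : 0 < m) (hn : 0 < n)
    (D : Set (EuclideanSpace ℝ (Fin m × Fin n))) (hD : IsOpen D)
    (f : EuclideanSpace ℝ (Fin m × Fin n) → ℝ)
    (hf : ∀ x ∈ D, DifferentiableAt ℝ f x)
    (a : ℝ) (S : Set (EuclideanSpace ℝ (Fin m × Fin n)))
    (hS : S = {K ∈ D | f K ≤ a}) (hcpt : IsCompact S)
    (μ₂ : ℝ) (hμ₂ : 0 < μ₂)
    (hlip : ∀ K ∈ S, ∀ K' ∈ S,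
      ‖gradient f K - gradient f K'‖ ≤ μ₂ * ‖K - K'‖)
    (K : EuclideanSpace ℝ (Fin m × Fin n)) (hK : K ∈ S)
    (G : EuclideanSpace ℝ (Fin m × Fin n)) (hG : G ≠ 0)
    (η : ℝ) (hη : 0 < η)
    (hcorr : μ₂ * η / 2 * ‖G‖ ^ 2 < ⟪gradient f K, G⟫) :
    (∀ γ : ℝ, 0 ≤ γ → γ ≤ η → K - γ • G ∈ S) ∧
    K - η • G ∈ S ∧ f (K - η • G) ≤ a := by
  set c₀ : ℝ := ⟪gradient f K, G⟫ with hc₀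
  set N : ℝ := ‖G‖ ^ 2 with hN
  have hGpos : 0 < ‖G‖ := norm_pos_iff.mpr hG
  have hNpos : 0 < N := by positivity
  set ε : ℝ := c₀ - μ₂ * η / 2 * N with hε
  have hεpos : 0 < ε := by simp only [hε]; linarith
  have hSsub : S ⊆ D := by rw [hS]; exact fun x hx => hx.1
  have hfKa : f K ≤ a := by rw [hS] at hK; exact hK.2
  have hcontp : Continuous (fun s : ℝ => K - s • G) := by fun_prop
  -- derivative of the path composition
  have hφ : ∀ s : ℝ, K - s • G ∈ D →
      HasDerivAt (fun t : ℝ => f (K - t • G)) (-⟪gradient f (K - s • G), G⟫) s := by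
    intro s hs
    have hpath : HasDerivAt (fun t : ℝ => K - t • G) (-G) s := by
      simpa using ((hasDerivAt_id s).smul_const G).const_sub K
    have hg := (hf _ hs).hasGradientAt.hasFDerivAt
    have := hg.comp_hasDerivAt s hpath
    simp [InnerProductSpace.toDual_apply_apply, inner_neg_right] at this ⊢
    exact this
  -- key Taylor-type estimate
  have hkey : ∀ γ : ℝ, 0 ≤ γ → γ ≤ η → (∀ s, 0 ≤ s → s ≤ γ → K - s • G ∈ S) →
      f (K - γ • G) ≤ a - γ * ε := by
    intro γ hγ0 hγη hsegm
    rcases eq_or_lt_of_le hγ0 with h0 | h0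
    · simp only [← h0, zero_smul, sub_zero, mul_zero]
      simpa using hfKa
    set χ : ℝ → ℝ := fun s => f K - s * c₀ + s ^ 2 * (μ₂ * N / 2) - f (K - s • G) with hχ
    have hχd : ∀ s : ℝ, K - s • G ∈ D →
        HasDerivAt χ (-c₀ + 2 * s * (μ₂ * N / 2) + ⟪gradient f (K - s • G), G⟫) s := by
      intro s hs
      have h1 : HasDerivAt (fun t : ℝ => f K - t * c₀) (-c₀) s :=
        (hasDerivAt_mul_const c₀).const_sub (f K)
      have h2 : HasDerivAt (fun t : ℝ => t ^ 2) (2 * s) s := by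
        simpa using hasDerivAt_pow 2 s
      have h3 := (h1.add (h2.mul_const (μ₂ * N / 2))).sub (hφ s hs)
      exact h3.congr_deriv (by ring)
    have hmono : MonotoneOn χ (Set.Icc 0 γ) := by
      apply monotoneOn_of_hasDerivWithinAt_nonneg (convex_Icc 0 γ)
        (f' := fun s => -c₀ + 2 * s * (μ₂ * N / 2) + ⟪gradient f (K - s • G), G⟫)
      · intro s hs
        exact (hχd s (hSsub (hsegm s hs.1 hs.2))).continuousAt.continuousWithinAt
      · intro s hs
        rw [interior_Icc] at hs
        exact (hχd s (hSsub (hsegm s hs.1.le hs.2.le))).hasDerivWithinAt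
      · intro s hs
        rw [interior_Icc] at hs
        have hsS : K - s • G ∈ S := hsegm s hs.1.le hs.2.le
        have hl := hlip _ hsS _ hK
        have hdist : ‖(K - s • G) - K‖ = s * ‖G‖ := by
          simp [norm_smul, abs_of_nonneg hs.1.le]
        rw [hdist] at hl
        have hCS : |⟪gradient f (K - s • G) - gradient f K, G⟫| ≤
            ‖gradient f (K - s • G) - gradient f K‖ * ‖G‖ := abs_real_inner_le_norm _ _
        have hsub : ⟪gradient f (K - s • G) - gradient f K, G⟫ =
            ⟪gradient f (K - s • G), G⟫ - c₀ := by
          rw [inner_sub_left]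
        have habs := (abs_le.mp hCS).1
        rw [hsub] at habs
        have hb : ‖gradient f (K - s • G) - gradient f K‖ * ‖G‖ ≤ μ₂ * (s * ‖G‖) * ‖G‖ := by
          have := mul_le_mul_of_nonneg_right hl (norm_nonneg G)
          linarith
        have hNsq : 2 * s * (μ₂ * N / 2) = μ₂ * (s * ‖G‖) * ‖G‖ := by
          rw [hN]; ring
        rw [hNsq]
        linarith
    have h01 : χ 0 ≤ χ γ := hmono (Set.left_mem_Icc.mpr hγ0) (Set.mem_Icc.mpr ⟨hγ0, le_refl γ⟩) hγ0
    have hχ0 : χ 0 = 0 := by simp [hχ]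
    rw [hχ0] at h01
    have hχγ : χ γ = f K - γ * c₀ + γ ^ 2 * (μ₂ * N / 2) - f (K - γ • G) := rfl
    rw [hχγ] at h01
    have hγsq : γ ^ 2 ≤ γ * η := by nlinarith
    have : γ ^ 2 * (μ₂ * N / 2) ≤ γ * η * (μ₂ * N / 2) := by
      apply mul_le_mul_of_nonneg_right hγsq; positivity
    simp only [hε]
    nlinarith
  -- the sup argument
  set A : Set ℝ := {γ : ℝ | γ ∈ Set.Icc 0 η ∧ ∀ s, 0 ≤ s → s ≤ γ → K - s • G ∈ S} with hA
  have h0A : (0 : ℝ) ∈ A := by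
    refine ⟨Set.left_mem_Icc.mpr hη.le, fun s hs0 hs1 => ?_⟩
    have : s = 0 := le_antisymm hs1 hs0
    simpa [this] using hK
  have hbdd : BddAbove A := ⟨η, fun x hx => hx.1.2⟩
  set c : ℝ := sSup A with hc
  have hc0 : 0 ≤ c := le_csSup hbdd h0A
  have hcη : c ≤ η := csSup_le ⟨0, h0A⟩ fun x hx => hx.1.2
  have hseg : ∀ s : ℝ, 0 ≤ s → s < c → K - s • G ∈ S := by
    intro s hs0 hsc
    obtain ⟨γ, hγA, hsγ⟩ := exists_lt_of_lt_csSup ⟨0, h0A⟩ hsc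
    exact hγA.2 s hs0 hsγ.le
  have hScl : IsClosed S := hcpt.isClosed
  have hcS : K - c • G ∈ S := by
    rcases eq_or_lt_of_le hc0 with h | h
    · simpa [← h] using hK
    · have htd : Filter.Tendsto (fun s : ℝ => K - s • G) (nhdsWithin c (Set.Iio c))
          (nhds (K - c • G)) := (hcontp.tendsto c).mono_left nhdsWithin_le_nhds
      refine hScl.mem_of_tendsto htd ?_
      have hmem : Set.Ioo 0 c ∈ nhdsWithin c (Set.Iio c) :=
        Ioo_mem_nhdsLT_of_mem ⟨h, le_refl c⟩
      filter_upwards [hmem] with s hs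
      exact hseg s hs.1.le hs.2
  have hcA : c ∈ A := by
    refine ⟨⟨hc0, hcη⟩, fun s hs0 hsc => ?_⟩
    rcases lt_or_eq_of_le hsc with h | h
    · exact hseg s hs0 h
    · rw [h]; exact hcS
  have hceq : c = η := by
    by_contra hne
    have hlt : c < η := lt_of_le_of_ne hcη hne
    -- in both cases we produce points of S slightly beyond c
    have hnear : ∀ᶠ s in nhdsWithin c (Set.Ioi c), K - s • G ∈ S := by
      rcases eq_or_lt_of_le hc0 with h0 | h0
      · -- c = 0 : use the strict negative derivative at 0
        have hKD : K ∈ D := hSsub hK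
        have hd : HasDerivAt (fun s : ℝ => f (K - s • G)) (-c₀) 0 := by
          have h0D : K - (0 : ℝ) • G ∈ D := by simpa using hKD
          have := hφ 0 h0D
          simpa [hc₀] using this
        have hneg : -c₀ < 0 := by
          have : (0 : ℝ) < μ₂ * η / 2 * N := by positivity
          simp only [hc₀]; linarith
        rw [hasDerivAt_iff_tendsto_slope] at hd
        have hmono' : nhdsWithin (0 : ℝ) (Set.Ioi 0) ≤ nhdsWithin 0 {(0 : ℝ)}ᶜ :=
          nhdsWithin_mono 0 fun x hx => ne_of_gt hx
        have hslope : ∀ᶠ s in nhdsWithin (0 : ℝ) (Set.Ioi 0),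
            slope (fun s : ℝ => f (K - s • G)) 0 s < 0 :=
          (hd.mono_left hmono').eventually_mem (Iio_mem_nhds hneg)
        have hDmem : ∀ᶠ s in nhdsWithin (0 : ℝ) (Set.Ioi 0), K - s • G ∈ D := by
          have h0D : K - (0 : ℝ) • G ∈ D := by simpa using hKD
          exact (((hcontp.tendsto 0).eventually_mem (hD.mem_nhds h0D)).filter_mono
            nhdsWithin_le_nhds)
        rw [← h0]
        filter_upwards [hslope, hDmem, self_mem_nhdsWithin] with s hs1 hs2 hs3
        have hspos : (0 : ℝ) < s := hs3
        rw [slope_def_field] at hs1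
        have hq : (f (K - s • G) - f (K - (0:ℝ) • G)) / (s - 0) < 0 := hs1
        rw [sub_zero] at hq
        have hnum : f (K - s • G) - f (K - (0:ℝ) • G) < 0 := by
          rcases div_neg_iff.mp hq with ⟨h1, h2⟩ | ⟨h1, h2⟩
          · linarith
          · exact h1
        have : f (K - s • G) < f K := by simpa using hnum
        rw [hS]
        exact ⟨hs2, le_trans this.le hfKa⟩
      · -- c > 0 : f (K - c • G) < a strictly, use continuity
        have hflt : f (K - c • G) < a := by
          have := hkey c hc0 hcη hcA.2
          nlinarith
        have hpcD : K - c • G ∈ D := hSsub hcS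
        have h1 : ∀ᶠ s in nhds c, K - s • G ∈ D :=
          (hcontp.tendsto c).eventually_mem (hD.mem_nhds hpcD)
        have h2 : ∀ᶠ s in nhds c, f (K - s • G) < a := by
          have hcont := ((hf _ hpcD).continuousAt.tendsto).comp (hcontp.tendsto c)
          have := hcont.eventually_mem (Iio_mem_nhds hflt)
          exact this.mono fun s hs => hs
        refine ((h1.and h2).filter_mono nhdsWithin_le_nhds).mono fun s hs => ?_
        rw [hS]; exact ⟨hs.1, hs.2.le⟩
    obtain ⟨u, hu, hsub⟩ := mem_nhdsGT_iff_exists_Ioo_subset.mp hnear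
    set γ' : ℝ := min ((c + u) / 2) η with hγ'
    have hγc : c < γ' := by
      apply lt_min _ hlt
      have : c < u := hu
      linarith
    have hγA : γ' ∈ A := by
      refine ⟨⟨le_trans hc0 hγc.le, min_le_right _ _⟩, fun s hs0 hsγ => ?_⟩
      rcases le_or_gt s c with h | h
      · exact hcA.2 s hs0 h
      · refine hsub ⟨h, ?_⟩
        have h1 : γ' ≤ (c + u) / 2 := min_le_left _ _
        have : c < u := hu
        linarith
    exact absurd (le_csSup hbdd hγA) (not_le.mpr hγc)
  have hmain : ∀ γ : ℝ, 0 ≤ γ → γ ≤ η → K - γ • G ∈ S := by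
    intro γ hγ0 hγη
    exact hcA.2 γ hγ0 (hceq ▸ hγη)
  have hη' : K - η • G ∈ S := hmain η hη.le le_rfl
  refine ⟨hmain, hη', ?_⟩
  rw [hS] at hη'
  exact hη'.2
end

section
/- Let T ≥ 1 be an integer, μ₁, μ₂, C_g > 0 reals, and 0 < η ≤ 1/(128 μ₂ (C_g² + T·C_g)). Let S ⊆ ℝ^{m×n}, let f be differentiable on an open set containing S, and suppose ‖∇f(K) − ∇f(K')‖_F ≤ μ₂ ‖K − K'‖_F for all K, K' ∈ S. Let K ∈ S, Ḡ ∈ ℝ^{m×n}, f* ∈ ℝ with f* ≤ f(K), and assume: (i) the segment {K − γ η Ḡ : 0 ≤ γ ≤ 1} is contained in S; (ii) f(K) − f* ≤ ‖∇f(K)‖_F² / (2 μ₁); (iii) ⟨∇f(K), Ḡ⟩ ≥ (1/8) ‖∇f(K)‖_F² − 8 μ₂ C_g T η ‖∇f(K)‖_F²; and (iv) ‖Ḡ‖_F ≤ 4 C_g ‖∇f(K)‖_F. Then f(K − η Ḡ) − f* ≤ (1 − η μ₁ / 8) (f(K) − f*). -/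
open RealInnerProductSpace


lemma stmt12_aux (μ₁ μ₂ Cg η Tr G B ip fK fstar fnext : ℝ)
    (hμ₁ : 0 < μ₁) (hμ₂ : 0 < μ₂) (hCg : 0 < Cg) (hη : 0 < η) (hTr : 1 ≤ Tr)
    (hηle : η ≤ 1 / (128 * μ₂ * (Cg ^ 2 + Tr * Cg)))
    (hGnn : 0 ≤ G) (hBnn : 0 ≤ B)
    (hgd : fK - fstar ≤ G ^ 2 / (2 * μ₁))
    (hcorr : (1 / 8) * G ^ 2 - 8 * μ₂ * Cg * Tr * η * G ^ 2 ≤ ip)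
    (hGn : B ≤ 4 * Cg * G)
    (key : fnext ≤ fK - η * ip + μ₂ * η ^ 2 * B ^ 2 / 2) :
    fnext - fstar ≤ (1 - η * μ₁ / 8) * (fK - fstar) := by
  have hden : (0:ℝ) < 128 * μ₂ * (Cg ^ 2 + Tr * Cg) := by positivity
  have h1 : η * (128 * μ₂ * (Cg ^ 2 + Tr * Cg)) ≤ 1 := by
    rw [← le_div_iff₀ hden]; exact hηle
  have h2 : η * ((1 / 8) * G ^ 2 - 8 * μ₂ * Cg * Tr * η * G ^ 2) ≤ η * ip :=
    mul_le_mul_of_nonneg_left hcorr hη.le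
  have hB2 : B ^ 2 ≤ 16 * Cg ^ 2 * G ^ 2 := by
    have h := mul_le_mul hGn hGn hBnn (by positivity)
    calc B ^ 2 = B * B := sq B
      _ ≤ (4 * Cg * G) * (4 * Cg * G) := h
      _ = 16 * Cg ^ 2 * G ^ 2 := by ring
  have h3 : μ₂ * η ^ 2 * B ^ 2 / 2 ≤ 8 * μ₂ * Cg ^ 2 * η ^ 2 * G ^ 2 := by
    nlinarith [mul_le_mul_of_nonneg_left hB2 (show (0:ℝ) ≤ μ₂ * η ^ 2 / 2 by positivity)]
  have h5 : 2 * μ₁ * (fK - fstar) ≤ G ^ 2 := by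
    rw [le_div_iff₀ (by positivity)] at hgd
    linarith
  have h4 : η * μ₁ / 8 * (fK - fstar) ≤ η * G ^ 2 / 16 := by
    nlinarith [mul_le_mul_of_nonneg_left h5 hη.le]
  have hdec : η * G ^ 2 / 16 ≤ η * ip - μ₂ * η ^ 2 * B ^ 2 / 2 := by
    nlinarith [mul_le_mul_of_nonneg_left h1 (mul_nonneg hη.le (sq_nonneg G))]
  nlinarith [key, hdec, h4]

theorem stmt12 (m n : ℕ) (hm : 0 < m) (hn : 0 < n)
    (T : ℕ) (hT : 1 ≤ T)
    (μ₁ μ₂ Cg η : ℝ) (hμ₁ : 0 < μ₁) (hμ₂ : 0 < μ₂) (hCg : 0 < Cg)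
    (hη : 0 < η) (hηle : η ≤ 1 / (128 * μ₂ * (Cg ^ 2 + T * Cg)))
    (S D : Set (EuclideanSpace ℝ (Fin m × Fin n))) (hD : IsOpen D) (hSD : S ⊆ D)
    (f : EuclideanSpace ℝ (Fin m × Fin n) → ℝ)
    (hf : ∀ x ∈ D, DifferentiableAt ℝ f x)
    (hlip : ∀ K ∈ S, ∀ K' ∈ S,
      ‖gradient f K - gradient f K'‖ ≤ μ₂ * ‖K - K'‖)
    (K : EuclideanSpace ℝ (Fin m × Fin n)) (hK : K ∈ S)
    (Gbar : EuclideanSpace ℝ (Fin m × Fin n))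
    (fstar : ℝ) (hfs : fstar ≤ f K)
    -- (i) the whole update segment stays in S
    (hseg : ∀ γ : ℝ, 0 ≤ γ → γ ≤ 1 → K - (γ * η) • Gbar ∈ S)
    -- (ii) gradient dominance
    (hgd : f K - fstar ≤ ‖gradient f K‖ ^ 2 / (2 * μ₁))
    -- (iii) the update direction is positively correlated with the gradient
    (hcorr : (1 / 8) * ‖gradient f K‖ ^ 2 - 8 * μ₂ * Cg * T * η * ‖gradient f K‖ ^ 2 ≤
      ⟪gradient f K, Gbar⟫)
    -- (iv) norm bound on the update direction
    (hGn : ‖Gbar‖ ≤ 4 * Cg * ‖gradient f K‖) :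
    f (K - η • Gbar) - fstar ≤ (1 - η * μ₁ / 8) * (f K - fstar) := by
  set v : EuclideanSpace ℝ (Fin m × Fin n) := η • Gbar with hv
  set g := gradient f K with hgdef
  have hmem : ∀ t : ℝ, 0 ≤ t → t ≤ 1 → K - t • v ∈ S := by
    intro t ht0 ht1
    have := hseg t ht0 ht1
    rwa [hv, smul_smul]
  have hder : ∀ t : ℝ, 0 ≤ t → t ≤ 1 →
      HasDerivAt (fun s : ℝ => f (K - s • v)) (-⟪gradient f (K - t • v), v⟫) t := by
    intro t ht0 ht1
    have hx : K - t • v ∈ S := hmem t ht0 ht1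
    have hdf : DifferentiableAt ℝ f (K - t • v) := hf _ (hSD hx)
    have hgr := hdf.hasGradientAt
    have hpath : HasDerivAt (fun s : ℝ => K - s • v) (-v) t := by
      simpa using ((hasDerivAt_id t).smul_const v).const_sub K
    have hc := hgr.hasFDerivAt.comp_hasDerivAt t hpath
    have e : fderiv ℝ f (K - t • v) v = ⟪gradient f (K - t • v), v⟫ := by
      rw [gradient, InnerProductSpace.toDual_symm_apply]
    rw [← e]
    simpa [Function.comp_def, InnerProductSpace.toDual_apply_apply, inner_neg_right] using hc
  set φ : ℝ → ℝ := fun t => f (K - t • v) + t * ⟪g, v⟫ - μ₂ * ‖v‖ ^ 2 / 2 * t ^ 2 with hφ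
  have hφder : ∀ t : ℝ, 0 ≤ t → t ≤ 1 →
      HasDerivAt φ (-⟪gradient f (K - t • v), v⟫ + ⟪g, v⟫ - μ₂ * ‖v‖ ^ 2 * t) t := by
    intro t ht0 ht1
    have h1 := hder t ht0 ht1
    have h2 : HasDerivAt (fun s : ℝ => s * ⟪g, v⟫) ⟪g, v⟫ t := hasDerivAt_mul_const _
    have h3 : HasDerivAt (fun s : ℝ => μ₂ * ‖v‖ ^ 2 / 2 * s ^ 2) (μ₂ * ‖v‖ ^ 2 * t) t := by
      have := (hasDerivAt_pow 2 t).const_mul (μ₂ * ‖v‖ ^ 2 / 2)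
      exact this.congr_deriv (by rw [show (2:ℕ) - 1 = 1 from rfl, pow_one]; push_cast; ring)
    exact (h1.add h2).sub h3
  have hφmono : φ 1 ≤ φ 0 := by
    have hanti : AntitoneOn φ (Set.Icc (0:ℝ) 1) := by
      apply antitoneOn_of_deriv_nonpos (convex_Icc 0 1)
      · intro t ht
        exact (hφder t ht.1 ht.2).continuousAt.continuousWithinAt
      · intro t ht
        rw [interior_Icc] at ht
        exact (hφder t ht.1.le ht.2.le).differentiableAt.differentiableWithinAt
      · intro t ht
        rw [interior_Icc] at ht
        rw [(hφder t ht.1.le ht.2.le).deriv]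
        have hx : K - t • v ∈ S := hmem t ht.1.le ht.2.le
        have hl := hlip K hK _ hx
        have hKx : ‖K - (K - t • v)‖ = t * ‖v‖ := by
          rw [sub_sub_cancel, norm_smul, Real.norm_eq_abs, abs_of_nonneg ht.1.le]
        have hinner : ⟪g, v⟫ - ⟪gradient f (K - t • v), v⟫ ≤ μ₂ * (t * ‖v‖) * ‖v‖ := by
          calc ⟪g, v⟫ - ⟪gradient f (K - t • v), v⟫
              = ⟪g - gradient f (K - t • v), v⟫ := by rw [inner_sub_left]
            _ ≤ ‖g - gradient f (K - t • v)‖ * ‖v‖ := real_inner_le_norm _ _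
            _ ≤ (μ₂ * ‖K - (K - t • v)‖) * ‖v‖ := by
                apply mul_le_mul_of_nonneg_right _ (norm_nonneg _)
                exact hl
            _ = μ₂ * (t * ‖v‖) * ‖v‖ := by rw [hKx]
        nlinarith [hinner]
    exact hanti (Set.left_mem_Icc.mpr zero_le_one) (Set.right_mem_Icc.mpr zero_le_one)
      zero_le_one
  have key : f (K - v) ≤ f K - ⟪g, v⟫ + μ₂ * ‖v‖ ^ 2 / 2 := by
    have h0 : φ 0 = f K := by simp [hφ]
    have h1 : φ 1 = f (K - v) + ⟪g, v⟫ - μ₂ * ‖v‖ ^ 2 / 2 := by simp [hφ]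
    rw [h0, h1] at hφmono
    linarith
  have hvnorm : ‖v‖ = η * ‖Gbar‖ := by
    rw [hv, norm_smul, Real.norm_eq_abs, abs_of_pos hη]
  have hinner_v : ⟪g, v⟫ = η * ⟪g, Gbar⟫ := real_inner_smul_right _ _ _
  have key' : f (K - η • Gbar) ≤ f K - η * ⟪g, Gbar⟫ + μ₂ * η ^ 2 * ‖Gbar‖ ^ 2 / 2 := by
    have hk := key
    rw [hinner_v, hvnorm] at hk
    calc f (K - η • Gbar) = f (K - v) := by rw [hv]
      _ ≤ f K - η * ⟪g, Gbar⟫ + μ₂ * (η * ‖Gbar‖) ^ 2 / 2 := hk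
      _ = f K - η * ⟪g, Gbar⟫ + μ₂ * η ^ 2 * ‖Gbar‖ ^ 2 / 2 := by ring
  have hT' : (1:ℝ) ≤ (T:ℝ) := by exact_mod_cast hT
  exact stmt12_aux μ₁ μ₂ Cg η T ‖g‖ ‖Gbar‖ ⟪g, Gbar⟫ (f K) fstar (f (K - η • Gbar))
    hμ₁ hμ₂ hCg hη hT' hηle (norm_nonneg _) (norm_nonneg _) hgd hcorr hGn key'
end
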